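/- arXiv:1911.01297 — 7 statements merged into one kernel-verified Lean document; each statement's English description precedes it below -/
import Mathlib

section
/- Let M ∈ ℝ^{n×n} be symmetric positive definite with positive-definite square root M^{1/2}, and let R ∈ ℝ^{k×n}. Then Rᵀ (R M⁻¹ Rᵀ)⁺ = M^{1/2} (R M^{-1/2})⁺. -/
open Matrix

def IsMoorePenrose {n m : Type*} [Fintype n] [Fintype m] [DecidableEq n] [DecidableEq m]
    (A : Matrix n m ℝ) (A' : Matrix m n ℝ) : Prop :=
  A * A' * A = A ∧ A' * A * A' = A' ∧ (A * A')ᵀ = A * A' ∧ (A' * A)ᵀ = A' * A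

lemma mp_unique {a b : Type*} [Fintype a] [Fintype b] [DecidableEq a] [DecidableEq b]
    (A : Matrix a b ℝ) (X Y : Matrix b a ℝ)
    (hX : IsMoorePenrose A X) (hY : IsMoorePenrose A Y) : X = Y := by
  obtain ⟨hX1, hX2, hX3, hX4⟩ := hX
  obtain ⟨hY1, hY2, hY3, hY4⟩ := hY
  have e1 : X = X * A * Y := by
    calc X = X * A * X := hX2.symm
    _ = X * (A * X)ᵀ := by rw [hX3, Matrix.mul_assoc]
    _ = X * (Xᵀ * Aᵀ) := by rw [transpose_mul]
    _ = X * (Xᵀ * (A * Y * A)ᵀ) := by rw [hY1]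
    _ = X * (Xᵀ * (Aᵀ * (A * Y)ᵀ)) := by rw [transpose_mul]
    _ = X * (A * X)ᵀ * (A * Y)ᵀ := by
        rw [transpose_mul A X]; simp only [Matrix.mul_assoc]
    _ = X * (A * X) * (A * Y) := by rw [hX3, hY3]
    _ = X * A * Y := by rw [← Matrix.mul_assoc X A X, hX2, Matrix.mul_assoc]
  have e2 : Y = X * A * Y := by
    calc Y = Y * A * Y := hY2.symm
    _ = (Y * A)ᵀ * Y := by rw [hY4]
    _ = Aᵀ * Yᵀ * Y := by rw [transpose_mul]
    _ = (A * X * A)ᵀ * Yᵀ * Y := by rw [hX1]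
    _ = Aᵀ * (Xᵀ * Aᵀ) * Yᵀ * Y := by rw [transpose_mul, transpose_mul]
    _ = (X * A)ᵀ * ((Y * A)ᵀ * Y) := by
        rw [transpose_mul X A, transpose_mul Y A]; simp only [Matrix.mul_assoc]
    _ = X * A * (Y * A * Y) := by rw [hX4, hY4, Matrix.mul_assoc]
    _ = X * A * Y := by rw [hY2]
  rw [e1, ← e2]

lemma mul_transpose_self_eq_zero' {a b : Type*} [Fintype a] [Fintype b]
    (A : Matrix a b ℝ) (h : A * Aᵀ = 0) : A = 0 := by
  rw [← conjTranspose_eq_transpose_of_trivial] at h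
  exact Matrix.self_mul_conjTranspose_eq_zero.mp h

lemma mp_of_gram {a b : Type*} [Fintype a] [Fintype b] [DecidableEq a] [DecidableEq b]
    (B : Matrix a b ℝ) (X : Matrix a a ℝ) (hX : IsMoorePenrose (B * Bᵀ) X) :
    IsMoorePenrose B (Bᵀ * X) := by
  obtain ⟨h1, h2, h3, h4⟩ := hX
  have hCsymm : (B * Bᵀ)ᵀ = B * Bᵀ := by rw [transpose_mul, transpose_transpose]
  -- X is symmetric
  have hXsymm : Xᵀ = X := by
    refine mp_unique (B * Bᵀ) Xᵀ X ⟨?_, ?_, ?_, ?_⟩ ⟨h1, h2, h3, h4⟩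
    · calc B * Bᵀ * Xᵀ * (B * Bᵀ) = (B * Bᵀ * X * (B * Bᵀ))ᵀ := by
            simp only [transpose_mul, transpose_transpose, Matrix.mul_assoc]
      _ = B * Bᵀ := by rw [h1, hCsymm]
    · calc Xᵀ * (B * Bᵀ) * Xᵀ = (X * (B * Bᵀ) * X)ᵀ := by
            simp only [transpose_mul, transpose_transpose, Matrix.mul_assoc]
      _ = Xᵀ := by rw [h2]
    · calc (B * Bᵀ * Xᵀ)ᵀ = X * (B * Bᵀ) := by
            simp only [transpose_mul, transpose_transpose, Matrix.mul_assoc]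
      _ = (X * (B * Bᵀ))ᵀ := h4.symm
      _ = B * Bᵀ * Xᵀ := by
            simp only [transpose_mul, transpose_transpose, Matrix.mul_assoc]
    · calc (Xᵀ * (B * Bᵀ))ᵀ = B * Bᵀ * X := by
            simp only [transpose_mul, transpose_transpose, Matrix.mul_assoc]
      _ = (B * Bᵀ * X)ᵀ := h3.symm
      _ = Xᵀ * (B * Bᵀ) := by
            simp only [transpose_mul, transpose_transpose, Matrix.mul_assoc]
  -- key : B * Bᵀ * X * B = B
  have hDBt : (B * Bᵀ * X * B - B) * Bᵀ = 0 := by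
    rw [Matrix.sub_mul, Matrix.mul_assoc, h1, sub_self]
  have hDDt : (B * Bᵀ * X * B - B) * (B * Bᵀ * X * B - B)ᵀ = 0 := by
    have hDt : (B * Bᵀ * X * B - B)ᵀ = Bᵀ * ((B * Bᵀ * X)ᵀ) - Bᵀ := by
      rw [transpose_sub, transpose_mul]
    rw [hDt, Matrix.mul_sub, ← Matrix.mul_assoc, hDBt, Matrix.zero_mul]; simp
  have hkey : B * Bᵀ * X * B = B :=
    sub_eq_zero.mp (mul_transpose_self_eq_zero' _ hDDt)
  refine ⟨?_, ?_, ?_, ?_⟩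
  · calc B * (Bᵀ * X) * B = B * Bᵀ * X * B := by simp only [Matrix.mul_assoc]
    _ = B := hkey
  · calc Bᵀ * X * B * (Bᵀ * X) = Bᵀ * (X * (B * Bᵀ) * X) := by simp only [Matrix.mul_assoc]
    _ = Bᵀ * X := by rw [h2]
  · calc (B * (Bᵀ * X))ᵀ = (B * Bᵀ * X)ᵀ := by rw [Matrix.mul_assoc]
    _ = B * Bᵀ * X := h3
    _ = B * (Bᵀ * X) := by rw [Matrix.mul_assoc]
  · calc (Bᵀ * X * B)ᵀ
        = Bᵀ * Xᵀ * B := by simp only [transpose_mul, transpose_transpose, Matrix.mul_assoc]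
    _ = Bᵀ * X * B := by rw [hXsymm]

theorem stmt4 {n k : ℕ} (M S : Matrix (Fin n) (Fin n) ℝ)
    (hM : M.PosDef) (hS : S.PosDef) (hSS : S * S = M)
    (R : Matrix (Fin k) (Fin n) ℝ)
    (Xp : Matrix (Fin k) (Fin k) ℝ) (Yp : Matrix (Fin n) (Fin k) ℝ)
    (hXp : IsMoorePenrose (R * M⁻¹ * Rᵀ) Xp)
    (hYp : IsMoorePenrose (R * S⁻¹) Yp) :
    Rᵀ * Xp = S * Yp := by
  have hSsymm : Sᵀ = S := by
    rw [← conjTranspose_eq_transpose_of_trivial]; exact hS.1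
  have hSinv : S⁻¹ᵀ = S⁻¹ := by rw [transpose_nonsing_inv, hSsymm]
  have hBt : (R * S⁻¹)ᵀ = S⁻¹ * Rᵀ := by rw [transpose_mul, hSinv]
  have hC : R * M⁻¹ * Rᵀ = (R * S⁻¹) * (R * S⁻¹)ᵀ := by
    rw [hBt, ← hSS, Matrix.mul_inv_rev]; simp only [Matrix.mul_assoc]
  rw [hC] at hXp
  have hZY : (R * S⁻¹)ᵀ * Xp = Yp :=
    mp_unique (R * S⁻¹) _ Yp (mp_of_gram (R * S⁻¹) Xp hXp) hYp
  rw [← hZY, hBt, ← Matrix.mul_assoc, ← Matrix.mul_assoc,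
    Matrix.mul_nonsing_inv S (isUnit_iff_ne_zero.mpr hS.det_pos.ne'), Matrix.one_mul]
end

section
/- Let R₁, R₂ ∈ ℝ^{k×n} have the same nullspace, and let M ∈ ℝ^{n×n} be symmetric positive definite. Then (R₁ M^{-1/2})⁺ R₁ = (R₂ M^{-1/2})⁺ R₂. -/
open Matrix

private lemma ext_mulVec' {n m : ℕ} {A B : Matrix (Fin n) (Fin m) ℝ}
    (h : ∀ x, A *ᵥ x = B *ᵥ x) : A = B := by
  ext i j
  have := congrFun (h (Pi.single j 1)) i
  simpa [Matrix.mulVec_single] using this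

private lemma proj_mul_eq {n : ℕ} {P Q : Matrix (Fin n) (Fin n) ℝ}
    (hQ : Q * Q = Q)
    (hk : ∀ x, Q *ᵥ x = 0 → P *ᵥ x = 0) : P * Q = P := by
  apply ext_mulVec'
  intro x
  have hx : Q *ᵥ (x - Q *ᵥ x) = 0 := by
    rw [Matrix.mulVec_sub, Matrix.mulVec_mulVec, hQ, sub_self]
  have hx1 := hk _ hx
  rw [Matrix.mulVec_sub, sub_eq_zero, Matrix.mulVec_mulVec] at hx1
  rw [← hx1]

private lemma proj_unique {n : ℕ} {P Q : Matrix (Fin n) (Fin n) ℝ}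
    (hPi : P * P = P) (hQi : Q * Q = Q) (hPs : Pᵀ = P) (hQs : Qᵀ = Q)
    (hk : ∀ x, P *ᵥ x = 0 ↔ Q *ᵥ x = 0) : P = Q := by
  have h12 : P * Q = P := proj_mul_eq hQi (fun x hx => (hk x).mpr hx)
  have h21 : Q * P = Q := proj_mul_eq hPi (fun x hx => (hk x).mp hx)
  calc P = P * Q := h12.symm
  _ = (Qᵀ * Pᵀ)ᵀ := by rw [← Matrix.transpose_mul, Matrix.transpose_transpose]
  _ = (Q * P)ᵀ := by rw [hPs, hQs]
  _ = Qᵀ := by rw [h21]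
  _ = Q := hQs

theorem stmt6 {n k : ℕ} (R₁ R₂ : Matrix (Fin k) (Fin n) ℝ)
    (hker : LinearMap.ker (R₁.mulVecLin) = LinearMap.ker (R₂.mulVecLin))
    (M S : Matrix (Fin n) (Fin n) ℝ)
    (hM : M.PosDef) (hS : S.PosDef) (hSS : S * S = M)
    (Yp₁ Yp₂ : Matrix (Fin n) (Fin k) ℝ)
    (hYp₁ : IsMoorePenrose (R₁ * S⁻¹) Yp₁) (hYp₂ : IsMoorePenrose (R₂ * S⁻¹) Yp₂) :
    Yp₁ * R₁ = Yp₂ * R₂ := by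
  obtain ⟨h1a, h1b, h1c, h1d⟩ := hYp₁
  obtain ⟨h2a, h2b, h2c, h2d⟩ := hYp₂
  have hkerR : ∀ y, R₁ *ᵥ y = 0 ↔ R₂ *ᵥ y = 0 := by
    intro y
    have := SetLike.ext_iff.mp hker y
    simpa [LinearMap.mem_ker, Matrix.mulVecLin_apply] using this
  have hkerA : ∀ x, (R₁ * S⁻¹) *ᵥ x = 0 ↔ (R₂ * S⁻¹) *ᵥ x = 0 := by
    intro x
    rw [← Matrix.mulVec_mulVec, ← Matrix.mulVec_mulVec]
    exact hkerR _
  have kerP : ∀ (R : Matrix (Fin k) (Fin n) ℝ) (Y : Matrix (Fin n) (Fin k) ℝ),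
      (R * S⁻¹) * Y * (R * S⁻¹) = R * S⁻¹ →
      ∀ x, (Y * (R * S⁻¹)) *ᵥ x = 0 ↔ (R * S⁻¹) *ᵥ x = 0 := by
    intro R Y ha x
    constructor
    · intro h
      have : (R * S⁻¹) *ᵥ x = ((R * S⁻¹) * (Y * (R * S⁻¹))) *ᵥ x := by
        rw [← Matrix.mul_assoc, ha]
      rw [this, ← Matrix.mulVec_mulVec, h, Matrix.mulVec_zero]
    · intro h
      rw [← Matrix.mulVec_mulVec, h, Matrix.mulVec_zero]
  have hkerP : ∀ x, (Yp₁ * (R₁ * S⁻¹)) *ᵥ x = 0 ↔ (Yp₂ * (R₂ * S⁻¹)) *ᵥ x = 0 := by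
    intro x
    rw [kerP R₁ Yp₁ h1a x, kerP R₂ Yp₂ h2a x]
    exact hkerA x
  have hP₁idem : (Yp₁ * (R₁ * S⁻¹)) * (Yp₁ * (R₁ * S⁻¹)) = Yp₁ * (R₁ * S⁻¹) := by
    rw [← Matrix.mul_assoc, h1b]
  have hP₂idem : (Yp₂ * (R₂ * S⁻¹)) * (Yp₂ * (R₂ * S⁻¹)) = Yp₂ * (R₂ * S⁻¹) := by
    rw [← Matrix.mul_assoc, h2b]
  have hPeq : Yp₁ * (R₁ * S⁻¹) = Yp₂ * (R₂ * S⁻¹) :=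
    proj_unique hP₁idem hP₂idem h1d h2d hkerP
  have hSunit : IsUnit S.det := (Matrix.isUnit_iff_isUnit_det S).mp hS.isUnit
  have hSinv : S⁻¹ * S = 1 := Matrix.nonsing_inv_mul S hSunit
  have hR₁ : R₁ = (R₁ * S⁻¹) * S := by rw [Matrix.mul_assoc, hSinv, Matrix.mul_one]
  have hR₂ : R₂ = (R₂ * S⁻¹) * S := by rw [Matrix.mul_assoc, hSinv, Matrix.mul_one]
  rw [hR₁, hR₂, ← Matrix.mul_assoc Yp₁ (R₁ * S⁻¹) S, ← Matrix.mul_assoc Yp₂ (R₂ * S⁻¹) S, hPeq]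
end

section
/- Let G ∈ ℝ^{p×n} have full row rank, let M ∈ ℝ^{n×n} be symmetric positive definite, and let R ∈ ℝ^{k×n} satisfy range(Rᵀ) = null(G). Then M Gᵀ (G M Gᵀ)⁻¹ G + M^{1/2} (R M^{-1/2})⁺ R M⁻¹ = I_n. -/
/-!
With `C = G S` and `B = R S⁻¹` (`S = M^{1/2}`) the left-hand side is `S (Q + P) S⁻¹`, where
`Q = Cᵀ (C Cᵀ)⁻¹ C` and `P = B⁺ B` are the orthogonal projectors onto `range Cᵀ` and onto
`range Bᵀ = ker C`, its orthogonal complement; hence `Q + P = 1`.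
-/

open Matrix

namespace Matrix

variable {l m n K : Type*} [Fintype m] [Fintype n]

theorem isUnit_det_of_rank_eq_card [Field K] [DecidableEq m] {A : Matrix m m K}
    (hA : A.rank = Fintype.card m) : IsUnit A.det := by
  have hrange : LinearMap.range A.mulVecLin = ⊤ :=
    Submodule.eq_top_of_finrank_eq (by simpa [rank] using hA)
  exact (isUnit_iff_isUnit_det A).mp
    (mulVec_surjective_iff_isUnit.mp (LinearMap.range_eq_top.mp hrange))

theorem isUnit_det_mul_transpose_of_rank_eq_card [Field K] [LinearOrder K]
    [IsStrictOrderedRing K] [Fintype l] [DecidableEq l] {C : Matrix l n K}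
    (hC : C.rank = Fintype.card l) : IsUnit (C * Cᵀ).det :=
  isUnit_det_of_rank_eq_card (by rw [rank_self_mul_transpose, hC])

theorem mul_transpose_eq_zero_of_range_le_ker [CommRing K] {C : Matrix l n K}
    {B : Matrix m n K} (h : LinearMap.range Bᵀ.mulVecLin ≤ LinearMap.ker C.mulVecLin) :
    C * Bᵀ = 0 := by
  rw [LinearMap.range_le_ker_iff, ← mulVecLin_mul] at h
  refine mulVec_injective (funext fun x => ?_)
  rw [zero_mulVec]
  exact LinearMap.congr_fun h x

theorem range_transpose_mul_inv_eq_ker_mul_transpose [CommRing K] [DecidableEq n]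
    {R : Matrix m n K} {G : Matrix l n K} {S : Matrix n n K} (hS : IsUnit S.det)
    (h : LinearMap.range Rᵀ.mulVecLin = LinearMap.ker G.mulVecLin) :
    LinearMap.range (R * S⁻¹)ᵀ.mulVecLin = LinearMap.ker (G * Sᵀ).mulVecLin := by
  have hSt : IsUnit Sᵀ.det := by rwa [det_transpose]
  ext x
  have hx : x ∈ LinearMap.range (R * S⁻¹)ᵀ.mulVecLin ↔
      Sᵀ *ᵥ x ∈ LinearMap.range Rᵀ.mulVecLin := by
    simp only [LinearMap.mem_range, mulVecLin_apply, transpose_mul, transpose_nonsing_inv]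
    refine exists_congr fun y => ⟨fun hy => ?_, fun hy => ?_⟩
    · rw [← hy, mulVec_mulVec, ← Matrix.mul_assoc, mul_nonsing_inv _ hSt, Matrix.one_mul]
    · rw [← mulVec_mulVec, hy, mulVec_mulVec, nonsing_inv_mul _ hSt, one_mulVec]
  rw [hx, h]
  simp only [LinearMap.mem_ker, mulVecLin_apply, mulVec_mulVec]

end Matrix

namespace IsMoorePenrose

variable {m n : Type*} [Fintype m] [Fintype n] [DecidableEq m] [DecidableEq n]
  {A : Matrix m n ℝ} {A' : Matrix n m ℝ}

theorem mul_mul_self (h : IsMoorePenrose A A') : A' * A * (A' * A) = A' * A := by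
  rw [← Matrix.mul_assoc, h.2.1]

theorem mul_mul_transpose (h : IsMoorePenrose A A') : A' * A * Aᵀ = Aᵀ := by
  conv_lhs => rw [← h.2.2.2]
  rw [← transpose_mul, ← Matrix.mul_assoc, h.1]

theorem mulVec_eq_self_of_mem_range (h : IsMoorePenrose A A') {x : n → ℝ}
    (hx : x ∈ LinearMap.range Aᵀ.mulVecLin) : (A' * A) *ᵥ x = x := by
  obtain ⟨y, rfl⟩ := hx
  simp only [mulVecLin_apply, mulVec_mulVec, h.mul_mul_transpose]

theorem mul_mul_eq_zero_of_mul_transpose_eq_zero {l : Type*} (h : IsMoorePenrose A A')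
    {C : Matrix l n ℝ} (hC : C * Aᵀ = 0) : C * (A' * A) = 0 := by
  rw [← h.2.2.2, transpose_mul, ← Matrix.mul_assoc, hC, Matrix.zero_mul]

end IsMoorePenrose

theorem transpose_mul_inv_mul_add_eq_one {l m n : Type*} [Fintype l] [Fintype m] [Fintype n]
    [DecidableEq l] [DecidableEq m] [DecidableEq n] {C : Matrix l n ℝ} {B : Matrix m n ℝ}
    {Y : Matrix n m ℝ} (hY : IsMoorePenrose B Y) (hC : IsUnit (C * Cᵀ).det)
    (hBC : LinearMap.range Bᵀ.mulVecLin = LinearMap.ker C.mulVecLin) :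
    Cᵀ * (C * Cᵀ)⁻¹ * C + Y * B = 1 := by
  have hCP : C * (Y * B) = 0 := hY.mul_mul_eq_zero_of_mul_transpose_eq_zero
    (mul_transpose_eq_zero_of_range_le_ker hBC.le)
  have hPCt : Y * B * Cᵀ = 0 := by
    rw [← hY.2.2.2, ← transpose_mul, hCP, transpose_zero]
  have hCQ : C * (Cᵀ * (C * Cᵀ)⁻¹ * C) = C := by
    simp only [← Matrix.mul_assoc, mul_nonsing_inv _ hC, Matrix.one_mul]
  have hPQ : Y * B * (Cᵀ * (C * Cᵀ)⁻¹ * C) = 0 := by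
    simp only [← Matrix.mul_assoc, hPCt, Matrix.zero_mul]
  set E := 1 - (Cᵀ * (C * Cᵀ)⁻¹ * C + Y * B)
  have hCE : C * E = 0 := by
    rw [Matrix.mul_sub, Matrix.mul_add, hCQ, hCP, Matrix.mul_one, add_zero, sub_self]
  have hPE : Y * B * E = 0 := by
    rw [Matrix.mul_sub, Matrix.mul_add, hPQ, hY.mul_mul_self, Matrix.mul_one, zero_add,
      sub_self]
  -- Each column of `E` lies in `ker C = range Bᵀ`, where `Y * B` acts as the identity.
  have hE : E = 0 := mulVec_injective <| funext fun x => by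
    have hEx : E *ᵥ x ∈ LinearMap.range Bᵀ.mulVecLin := by
      rw [hBC, LinearMap.mem_ker, mulVecLin_apply, mulVec_mulVec, hCE, zero_mulVec]
    rw [← hY.mulVec_eq_self_of_mem_range hEx, mulVec_mulVec, hPE, zero_mulVec]
  exact (sub_eq_zero.mp hE).symm

theorem stmt8_general {p n k : ℕ} (G : Matrix (Fin p) (Fin n) ℝ) (hG : G.rank = p)
    (M S : Matrix (Fin n) (Fin n) ℝ) (hS : S.PosDef) (hSS : S * S = M)
    (R : Matrix (Fin k) (Fin n) ℝ)
    (hR : LinearMap.range (Rᵀ.mulVecLin) = LinearMap.ker (G.mulVecLin))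
    (Yp : Matrix (Fin n) (Fin k) ℝ) (hYp : IsMoorePenrose (R * S⁻¹) Yp) :
    M * Gᵀ * (G * M * Gᵀ)⁻¹ * G + S * Yp * R * M⁻¹ = 1 := by
  have hS_det : IsUnit S.det := (isUnit_iff_isUnit_det S).mp hS.isUnit
  have hS_symm : Sᵀ = S := hS.isHermitian.eq
  have hGS : IsUnit ((G * S) * (G * S)ᵀ).det := isUnit_det_mul_transpose_of_rank_eq_card <| by
    rw [rank_mul_eq_left_of_isUnit_det S G hS_det, hG, Fintype.card_fin]
  have hker : LinearMap.range (R * S⁻¹)ᵀ.mulVecLin = LinearMap.ker (G * S).mulVecLin := by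
    rw [range_transpose_mul_inv_eq_ker_mul_transpose hS_det hR, hS_symm]
  have key := transpose_mul_inv_mul_add_eq_one hYp hGS hker
  calc M * Gᵀ * (G * M * Gᵀ)⁻¹ * G + S * Yp * R * M⁻¹
      = S * ((G * S)ᵀ * ((G * S) * (G * S)ᵀ)⁻¹ * (G * S) + Yp * (R * S⁻¹)) * S⁻¹ := by
        simp only [← hSS, Matrix.mul_inv_rev, transpose_mul, hS_symm, Matrix.mul_add,
          Matrix.add_mul, Matrix.mul_assoc, mul_nonsing_inv _ hS_det, Matrix.mul_one]
    _ = 1 := by rw [key, Matrix.mul_one, mul_nonsing_inv _ hS_det]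

theorem stmt8 {p n k : ℕ} (G : Matrix (Fin p) (Fin n) ℝ) (hG : G.rank = p)
    (M S : Matrix (Fin n) (Fin n) ℝ) (hM : M.PosDef) (hS : S.PosDef) (hSS : S * S = M)
    (R : Matrix (Fin k) (Fin n) ℝ)
    (hR : LinearMap.range (Rᵀ.mulVecLin) = LinearMap.ker (G.mulVecLin))
    (Yp : Matrix (Fin n) (Fin k) ℝ) (hYp : IsMoorePenrose (R * S⁻¹) Yp) :
    M * Gᵀ * (G * M * Gᵀ)⁻¹ * G + S * Yp * R * M⁻¹ = 1 :=
  stmt8_general G hG M S hS hSS R hR Yp hYp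
end

section
/- Let M ∈ ℝ^{n×n} be symmetric positive definite, R ∈ ℝ^{k×n}, and h ∈ ℝⁿ with h ∈ range(Rᵀ). Then M^{1/2} (R M^{-1/2})⁺ R M⁻¹ h = h. -/
open Matrix

theorem stmt13 {n k : ℕ} (M S : Matrix (Fin n) (Fin n) ℝ)
    (hM : M.PosDef) (hS : S.PosDef) (hSS : S * S = M)
    (R : Matrix (Fin k) (Fin n) ℝ)
    (Yp : Matrix (Fin n) (Fin k) ℝ) (hYp : IsMoorePenrose (R * S⁻¹) Yp)
    (h : Fin n → ℝ) (hh : h ∈ LinearMap.range (Rᵀ.mulVecLin)) :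
    (S * Yp * R * M⁻¹).mulVec h = h := by
  obtain ⟨x, rfl⟩ := hh
  have hSinv : IsUnit S.det := isUnit_iff_ne_zero.mpr hS.det_pos.ne'
  have hSsym : Sᵀ = S := hS.isHermitian.eq
  have hSinvT : S⁻¹ᵀ = S⁻¹ := by rw [Matrix.transpose_nonsing_inv, hSsym]
  set Y := R * S⁻¹ with hY
  have hYT : Yᵀ = S⁻¹ * Rᵀ := by rw [hY, transpose_mul, hSinvT]
  -- key: Yp * Y * Yᵀ = Yᵀ
  have key : Yp * Y * Yᵀ = Yᵀ := by
    have h1 := hYp.1  -- Y * Yp * Y = Y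
    have h4 := hYp.2.2.2  -- (Yp * Y)ᵀ = Yp * Y
    calc Yp * Y * Yᵀ = (Yp * Y)ᵀ * Yᵀ := by rw [h4]
    _ = (Y * (Yp * Y))ᵀ := (transpose_mul _ _).symm
    _ = Yᵀ := by rw [← Matrix.mul_assoc, h1]
  have hMinv : M⁻¹ = S⁻¹ * S⁻¹ := by
    rw [← hSS, Matrix.mul_inv_rev]
  have hmat : S * Yp * R * M⁻¹ * Rᵀ = Rᵀ := by
    have : S * Yp * R * M⁻¹ * Rᵀ = S * (Yp * Y * Yᵀ) := by
      rw [hMinv, hYT, hY]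
      simp only [Matrix.mul_assoc]
    rw [this, key, hYT, ← Matrix.mul_assoc, Matrix.mul_nonsing_inv _ hSinv, Matrix.one_mul]
  show (S * Yp * R * M⁻¹).mulVec (Rᵀ.mulVec x) = Rᵀ.mulVec x
  rw [Matrix.mulVec_mulVec, hmat]
end

section
/- Let p₁, …, p_N, p_O ∈ ℝ³ with Jᵢ = [[I₃, −S(pᵢ − p_O)], [0, I₃]] and grasp matrix G = [J₁ᵀ, …, J_Nᵀ]. Then the range of Gᵀ equals the set of stacked vectors (χ₁, …, χ_N) ∈ (ℝ⁶)^N, χᵢ = (χᵢ,p, χᵢ,R), satisfying χᵢ,R = χⱼ,R and χᵢ,p − χⱼ,p = −S(pᵢ − pⱼ) χᵢ,R for all i, j. -/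
open Matrix

def skew (a : Fin 3 → ℝ) : Matrix (Fin 3) (Fin 3) ℝ :=
  !![0, -a 2, a 1; a 2, 0, -a 0; -a 1, a 0, 0]

lemma skew_sub (a b : Fin 3 → ℝ) : skew (a - b) = skew a - skew b := by
  ext i j
  fin_cases i <;> fin_cases j <;> simp [skew] <;> ring

theorem stmt16 {N : ℕ} (p : Fin N → Fin 3 → ℝ) (pO : Fin 3 → ℝ)
    (J : Fin N → Matrix (Fin 3 ⊕ Fin 3) (Fin 3 ⊕ Fin 3) ℝ)
    (hJ : ∀ i, J i = Matrix.fromBlocks 1 (-(skew (p i - pO))) 0 1)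
    (G : Matrix (Fin 3 ⊕ Fin 3) (Fin N × (Fin 3 ⊕ Fin 3)) ℝ)
    (hG : ∀ a i b, G a (i, b) = (J i)ᵀ a b) :
    ∀ χ : Fin N × (Fin 3 ⊕ Fin 3) → ℝ,
      χ ∈ LinearMap.range (Gᵀ.mulVecLin) ↔
        ∀ i j : Fin N,
          ((fun l => χ (i, Sum.inr l)) = fun l => χ (j, Sum.inr l)) ∧
          ((fun l => χ (i, Sum.inl l) - χ (j, Sum.inl l)) =
            (-(skew (p i - p j))).mulVec fun l => χ (i, Sum.inr l)) := by
  intro χ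
  have key : ∀ (x : Fin 3 ⊕ Fin 3 → ℝ) (i : Fin N) (b : Fin 3 ⊕ Fin 3),
      Gᵀ.mulVec x (i, b) = (J i).mulVec x b := by
    intro x i b
    simp only [Matrix.mulVec, dotProduct, Matrix.transpose_apply, hG]
  have helim : ∀ (x : Fin 3 ⊕ Fin 3 → ℝ), x = Sum.elim (x ∘ Sum.inl) (x ∘ Sum.inr) := by
    intro x; funext a; cases a <;> rfl
  constructor
  · rintro ⟨x, rfl⟩
    intro i j
    have hv : ∀ (i : Fin N) (b : Fin 3 ⊕ Fin 3),
        Gᵀ.mulVecLin x (i, b) =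
          Sum.elim ((1 : Matrix (Fin 3) (Fin 3) ℝ).mulVec (x ∘ Sum.inl)
              + (-(skew (p i - pO))).mulVec (x ∘ Sum.inr))
            ((0 : Matrix (Fin 3) (Fin 3) ℝ).mulVec (x ∘ Sum.inl)
              + (1 : Matrix (Fin 3) (Fin 3) ℝ).mulVec (x ∘ Sum.inr)) b := by
      intro i b
      rw [Matrix.mulVecLin_apply, key, hJ, helim x, Matrix.fromBlocks_mulVec]
    have hr : ∀ (i : Fin N) (l : Fin 3), Gᵀ.mulVecLin x (i, Sum.inr l) = x (Sum.inr l) := by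
      intro i l
      rw [hv i (Sum.inr l)]
      simp
    have hl : ∀ (i : Fin N) (l : Fin 3),
        Gᵀ.mulVecLin x (i, Sum.inl l)
          = x (Sum.inl l) + (-(skew (p i - pO))).mulVec (x ∘ Sum.inr) l := by
      intro i l
      rw [hv i (Sum.inl l)]
      simp
    constructor
    · funext l; rw [hr i l, hr j l]
    · funext l
      rw [hl i l, hl j l]
      have hfun : (fun l => Gᵀ.mulVecLin x (i, Sum.inr l)) = x ∘ Sum.inr := by
        funext l; exact hr i l
      rw [hfun]
      have : -(skew (p i - p j)) = -(skew (p i - pO)) - -(skew (p j - pO)) := by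
        rw [show p i - p j = (p i - pO) - (p j - pO) by abel, skew_sub]
        abel
      rw [this, Matrix.sub_mulVec]
      simp [Pi.sub_apply]
  · intro h
    rcases Nat.eq_zero_or_pos N with h0 | hpos
    · subst h0
      exact ⟨0, funext fun a => a.1.elim0⟩
    · set i0 : Fin N := ⟨0, hpos⟩
      set ω : Fin 3 → ℝ := fun l => χ (i0, Sum.inr l) with hω
      set v : Fin 3 → ℝ := fun l => χ (i0, Sum.inl l) + (skew (p i0 - pO)).mulVec ω l with hv
      refine ⟨Sum.elim v ω, ?_⟩
      funext a
      obtain ⟨i, b⟩ := a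
      rw [Matrix.mulVecLin_apply, key, hJ, Matrix.fromBlocks_mulVec]
      have hωi : (fun l => χ (i, Sum.inr l)) = ω := (h i i0).1
      cases b with
      | inr l =>
        simp only [Sum.elim_inr, Matrix.zero_mulVec, Matrix.one_mulVec, Pi.add_apply,
          Pi.zero_apply, zero_add, Sum.elim_inr]
        exact (congrFun hωi l).symm
      | inl l =>
        simp only [Sum.elim_inl, Matrix.one_mulVec, Pi.add_apply]
        have h2 := congrFun (h i i0).2 l
        rw [hωi] at h2
        have hskew : -(skew (p i - p i0)) = skew (p i0 - pO) - skew (p i - pO) := by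
          rw [show p i - p i0 = (p i - pO) - (p i0 - pO) by abel, skew_sub]
          abel
        rw [hskew, Matrix.sub_mulVec] at h2
        simp only [Pi.sub_apply] at h2
        have : χ (i, Sum.inl l) = χ (i0, Sum.inl l) + (skew (p i0 - pO)).mulVec ω l
            - (skew (p i - pO)).mulVec ω l := by linarith
        rw [this, hv]
        simp [Matrix.neg_mulVec, Pi.neg_apply]
        ring
end

section
/- Let pᵢ ≠ pⱼ ∈ ℝ³, Rᵢ ∈ SO(3), and define the bearing γ_b = Rᵢᵀ (pⱼ − pᵢ)/‖pⱼ − pᵢ‖. If the motion (ṗᵢ, ωᵢ, ṗⱼ, ωⱼ) satisfies ωᵢ = ωⱼ, ṗᵢ − ṗⱼ = −S(pᵢ − pⱼ)ωᵢ, and Ṙᵢ = S(ωᵢ)Rᵢ, then d/dt γ_b = 0; explicitly, −(P(γ_b)/‖pⱼ−pᵢ‖) Rᵢᵀ ṗᵢ + S(γ_b) Rᵢᵀ ωᵢ + (P(γ_b)/‖pⱼ−pᵢ‖) Rᵢᵀ ṗⱼ = 0, where P(x) = I₃ − x xᵀ/‖x‖². -/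
open Matrix

noncomputable def projC (x : Fin 3 → ℝ) : Matrix (Fin 3) (Fin 3) ℝ :=
  1 - (x ⬝ᵥ x)⁻¹ • Matrix.vecMulVec x x

lemma skew_smul (c : ℝ) (a : Fin 3 → ℝ) : skew (c • a) = c • skew a := by
  ext i j
  fin_cases i <;> fin_cases j <;> simp [skew] <;> ring

lemma skew_neg (a : Fin 3 → ℝ) : skew (-a) = -skew a := by
  ext i j
  fin_cases i <;> fin_cases j <;> simp [skew]

lemma skew_conj (M : Matrix (Fin 3) (Fin 3) ℝ) (a : Fin 3 → ℝ) :
    Mᵀ * skew (M.mulVec a) * M = M.det • skew a := by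
  ext i j
  fin_cases i <;> fin_cases j <;>
    simp [skew, Matrix.mul_apply, Matrix.mulVec, dotProduct,
      Matrix.det_fin_three, Fin.sum_univ_succ] <;> ring

lemma vecMulVec_mul_skew (x : Fin 3 → ℝ) : Matrix.vecMulVec x x * skew x = 0 := by
  ext i j
  fin_cases i <;> fin_cases j <;>
    simp [skew, Matrix.mul_apply, Matrix.vecMulVec_apply, Fin.sum_univ_succ] <;> ring

lemma projC_mul_skew (x : Fin 3 → ℝ) : projC x * skew x = skew x := by
  rw [projC, Matrix.sub_mul, Matrix.smul_mul, vecMulVec_mul_skew, smul_zero,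
    Matrix.one_mul, sub_zero]

theorem stmt18 (pi pj : Fin 3 → ℝ) (hne : pi ≠ pj)
    (Ri : Matrix (Fin 3) (Fin 3) ℝ) (hRi : Riᵀ * Ri = 1) (hdet : Ri.det = 1)
    (vi vj ωi ωj : Fin 3 → ℝ) (dRi : Matrix (Fin 3) (Fin 3) ℝ)
    (hω : ωi = ωj) (hv : vi - vj = (-(skew (pi - pj))).mulVec ωi)
    (hdR : dRi = skew ωi * Ri)
    (d : ℝ) (hd : d = Real.sqrt ((pj - pi) ⬝ᵥ (pj - pi)))
    (γb : Fin 3 → ℝ) (hγ : γb = d⁻¹ • Riᵀ.mulVec (pj - pi)) :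
    -(d⁻¹ • (projC γb * Riᵀ).mulVec vi) + (skew γb * Riᵀ).mulVec ωi +
        d⁻¹ • (projC γb * Riᵀ).mulVec vj = 0 := by
  have hRR : Ri * Riᵀ = 1 := mul_eq_one_comm.mp hRi
  have hu0 : pj - pi ≠ 0 := sub_ne_zero.mpr (Ne.symm hne)
  have hdotpos : 0 < (pj - pi) ⬝ᵥ (pj - pi) := by
    have hnn : 0 ≤ (pj - pi) ⬝ᵥ (pj - pi) := by
      simp only [dotProduct, Fin.sum_univ_three]
      exact add_nonneg (add_nonneg (mul_self_nonneg _) (mul_self_nonneg _)) (mul_self_nonneg _)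
    rcases lt_or_eq_of_le hnn with h | h
    · exact h
    · exact absurd ((dotProduct_self_eq_zero).mp h.symm) hu0
  have hd0 : d ≠ 0 := by
    rw [hd]
    exact ne_of_gt (Real.sqrt_pos.mpr hdotpos)
  -- Ri γb = d⁻¹ (pj - pi)
  have hkey : Ri.mulVec γb = d⁻¹ • (pj - pi) := by
    rw [hγ, Matrix.mulVec_smul, Matrix.mulVec_mulVec, hRR, Matrix.one_mulVec]
  have hu : pj - pi = d • Ri.mulVec γb := by
    rw [hkey, smul_smul, mul_inv_cancel₀ hd0, one_smul]
  -- conjugation identity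
  have hconj : skew (Ri.mulVec γb) = Ri * skew γb * Riᵀ := by
    have h1 := skew_conj Ri γb
    rw [hdet, one_smul] at h1
    have h2 : Ri * (Riᵀ * skew (Ri.mulVec γb) * Ri) * Riᵀ = skew (Ri.mulVec γb) := by
      rw [Matrix.mul_assoc Riᵀ, ← Matrix.mul_assoc Ri Riᵀ, hRR, Matrix.one_mul,
        Matrix.mul_assoc, hRR, Matrix.mul_one]
    rw [← h2, h1]
  have hskewu : skew (pj - pi) = d • (Ri * skew γb * Riᵀ) := by
    rw [hu, skew_smul, hconj]
  -- rewrite hv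
  have hv' : vj - vi = -((skew (pj - pi)).mulVec ωi) := by
    have : pi - pj = -(pj - pi) := by abel
    rw [this, skew_neg, neg_neg] at hv
    rw [← hv]; abel
  have hA : projC γb * Riᵀ * (Ri * skew γb * Riᵀ) = skew γb * Riᵀ := by
    calc projC γb * Riᵀ * (Ri * skew γb * Riᵀ)
        = projC γb * (Riᵀ * Ri) * (skew γb * Riᵀ) := by
          simp only [Matrix.mul_assoc]
      _ = projC γb * skew γb * Riᵀ := by rw [hRi, Matrix.mul_one, Matrix.mul_assoc]
      _ = skew γb * Riᵀ := by rw [projC_mul_skew]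
  have main : d⁻¹ • (projC γb * Riᵀ).mulVec (vj - vi) = -((skew γb * Riᵀ).mulVec ωi) := by
    rw [hv', hskewu, Matrix.smul_mulVec, Matrix.mulVec_neg, Matrix.mulVec_smul,
      smul_neg, smul_comm, smul_smul, mul_inv_cancel₀ hd0, one_smul,
      Matrix.mulVec_mulVec, hA]
  have expand : -(d⁻¹ • (projC γb * Riᵀ).mulVec vi) + (skew γb * Riᵀ).mulVec ωi +
      d⁻¹ • (projC γb * Riᵀ).mulVec vj
      = d⁻¹ • (projC γb * Riᵀ).mulVec (vj - vi) + (skew γb * Riᵀ).mulVec ωi := by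
    rw [Matrix.mulVec_sub, smul_sub]; abel
  rw [expand, main]; abel
end

section
/- Let M ∈ ℝ^{n×n} and M_O ∈ ℝ^{p×p} be symmetric positive definite and G ∈ ℝ^{p×n} have full row rank. Then M⁻¹ + Gᵀ M_O⁻¹ G is invertible, and (I_n − M Gᵀ(G M Gᵀ)⁻¹ G)(M⁻¹ + Gᵀ M_O⁻¹ G)⁻¹ = (I_n − M Gᵀ(G M Gᵀ)⁻¹ G) M. -/
/-!
Since `M` and `M_O` are positive definite, so is `M⁻¹ + Gᵀ M_O⁻¹ G`, hence it is invertible.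
Full row rank makes `G M Gᵀ` positive definite, so `P = 1 - M Gᵀ (G M Gᵀ)⁻¹ G` satisfies
`P M Gᵀ = 0`. Therefore `P M (M⁻¹ + Gᵀ M_O⁻¹ G) = P`, and multiplying on the right by the inverse
gives the identity.
-/

open Matrix

namespace Matrix

variable {m n R : Type*} [Fintype m] [Fintype n]

theorem linearIndependent_row_of_rank_eq_card [Field R] {A : Matrix m n R}
    (hA : A.rank = Fintype.card m) : LinearIndependent R A.row := by
  rw [linearIndependent_iff_card_eq_finrank_span, ← hA, rank_eq_finrank_span_row]
  rfl

theorem PosDef.mul_mul_transpose_of_rank_eq_card {A : Matrix n n ℝ} (hA : A.PosDef)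
    {B : Matrix m n ℝ} (hB : B.rank = Fintype.card m) : (B * A * Bᵀ).PosDef :=
  hA.mul_mul_conjTranspose_same
    (vecMul_injective_iff.mpr (linearIndependent_row_of_rank_eq_card hB))

variable [DecidableEq n]

theorem PosDef.inv_add_transpose_mul_mul [DecidableEq m] {A : Matrix n n ℝ} (hA : A.PosDef)
    {C : Matrix m m ℝ} (hC : C.PosDef) (B : Matrix m n ℝ) : (A⁻¹ + Bᵀ * C⁻¹ * B).PosDef :=
  hA.inv.add_posSemidef (by simpa using hC.inv.posSemidef.conjTranspose_mul_mul_same B)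

variable [CommRing R]

theorem one_sub_mul_inv_mul_mul_mul_transpose_eq_zero [DecidableEq m] {A : Matrix n n R}
    {B : Matrix m n R} (h : IsUnit (B * A * Bᵀ)) :
    (1 - A * Bᵀ * (B * A * Bᵀ)⁻¹ * B) * A * Bᵀ = 0 := by
  have h_cancel : A * Bᵀ * (B * A * Bᵀ)⁻¹ * B * A * Bᵀ = A * Bᵀ := by
    simpa only [Matrix.mul_assoc] using
      nonsing_inv_mul_cancel_right _ (A * Bᵀ) ((isUnit_iff_isUnit_det _).mp h)
  rw [Matrix.sub_mul, Matrix.sub_mul, Matrix.one_mul, h_cancel, sub_self]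

theorem mul_inv_add_mul_eq_mul_of_mul_mul_eq_zero {P A : Matrix n n R} {B : Matrix m n R}
    {C : Matrix m m R} (hA : IsUnit A) (hS : IsUnit (A⁻¹ + Bᵀ * C * B)) (hP : P * A * Bᵀ = 0) :
    P * (A⁻¹ + Bᵀ * C * B)⁻¹ = P * A := by
  have h_absorb : P * A * (A⁻¹ + Bᵀ * C * B) = P := by
    rw [Matrix.mul_add, mul_nonsing_inv_cancel_right _ _ ((isUnit_iff_isUnit_det _).mp hA),
      ← Matrix.mul_assoc, ← Matrix.mul_assoc, hP, Matrix.zero_mul, Matrix.zero_mul, add_zero]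
  calc P * (A⁻¹ + Bᵀ * C * B)⁻¹ = P * A * (A⁻¹ + Bᵀ * C * B) * (A⁻¹ + Bᵀ * C * B)⁻¹ := by
        rw [h_absorb]
    _ = P * A := mul_nonsing_inv_cancel_right _ _ ((isUnit_iff_isUnit_det _).mp hS)

end Matrix

theorem stmt19 {n p : ℕ} (M : Matrix (Fin n) (Fin n) ℝ) (hM : M.PosDef)
    (MO : Matrix (Fin p) (Fin p) ℝ) (hMO : MO.PosDef)
    (G : Matrix (Fin p) (Fin n) ℝ) (hG : G.rank = p) :
    IsUnit (M⁻¹ + Gᵀ * MO⁻¹ * G) ∧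
      ((1 : Matrix (Fin n) (Fin n) ℝ) - M * Gᵀ * (G * M * Gᵀ)⁻¹ * G) *
          (M⁻¹ + Gᵀ * MO⁻¹ * G)⁻¹ =
        ((1 : Matrix (Fin n) (Fin n) ℝ) - M * Gᵀ * (G * M * Gᵀ)⁻¹ * G) * M := by
  have hS : IsUnit (M⁻¹ + Gᵀ * MO⁻¹ * G) := (hM.inv_add_transpose_mul_mul hMO G).isUnit
  have hGMG : IsUnit (G * M * Gᵀ) :=
    (hM.mul_mul_transpose_of_rank_eq_card (by rwa [Fintype.card_fin])).isUnit
  exact ⟨hS, mul_inv_add_mul_eq_mul_of_mul_mul_eq_zero hM.isUnit hS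
    (one_sub_mul_inv_mul_mul_mul_transpose_eq_zero hGMG)⟩
end
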